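/- arXiv:1505.02671 — 6 statements merged into one kernel-verified Lean document; each statement's English description precedes it below -/
import Mathlib

section
/- Let f be nonconstant analytic on an open set containing the closed unit disk with |f| = 1 on the unit circle and f' ≠ 0 on the unit circle. Then as z traverses the unit circle once with positive orientation, arg(f(z)) is strictly increasing; equivalently, for z on the unit circle, the quantity Re(z·f'(z)/f(z)) > 0. -/
/-!
By the maximum modulus principle `‖f‖ < 1` on the open disk, so by compactness `‖f‖ ^ q ≤ 1/2`
on the circle of radius `1/2` for some `q`. The maximum modulus principle for `f ^ q / z` on the
annulus `1/2 < ‖z‖ < 1` then gives `‖f (t z)‖ ^ q ≤ t` for `1/2 < t < 1` and `‖z‖ = 1`. Hence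
`t ↦ ‖f (t z)‖ ^ (2 q) - t ^ 2` is `≤ 0` to the left of `t = 1`, where it vanishes, so its
derivative `2 q Re (z f'(z) / f(z)) - 2` there is nonnegative: `Re (z f'(z) / f(z)) ≥ 1 / q`.
-/

open Set Metric Filter Topology ComplexConjugate

lemma HasDerivAt.nonneg_of_eventually_le_left {v : ℝ → ℝ} {d a : ℝ} (hv : HasDerivAt v d a)
    (hle : ∀ᶠ t in 𝓝[<] a, v t ≤ v a) : 0 ≤ d := by
  refine ge_of_tendsto ((hasDerivAt_iff_tendsto_slope.mp hv).mono_left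
    (nhdsLT_le_nhdsNE a)) ?_
  filter_upwards [hle, self_mem_nhdsWithin] with t hvt (ht : t < a)
  rw [slope_def_field]
  exact div_nonneg_of_nonpos (by linarith) (by linarith)

lemma IsCompact.exists_pow_norm_le {X E : Type*} [TopologicalSpace X] [SeminormedAddCommGroup E]
    {K : Set X} {g : X → E} (hK : IsCompact K) (hg : ContinuousOn g K)
    (hlt : ∀ x ∈ K, ‖g x‖ < 1) {ε : ℝ} (hε : 0 < ε) : ∃ q : ℕ, ∀ x ∈ K, ‖g x‖ ^ q ≤ ε := by
  rcases K.eq_empty_or_nonempty with rfl | hne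
  · exact ⟨0, by simp⟩
  obtain ⟨x₀, hx₀, hmax⟩ := hK.exists_isMaxOn hne (continuous_norm.comp_continuousOn hg)
  obtain ⟨q, hq⟩ := exists_pow_lt_of_lt_one hε (hlt x₀ hx₀)
  exact ⟨q, fun x hx => (pow_le_pow_left₀ (norm_nonneg _) (hmax hx) q).trans hq.le⟩

lemma Complex.norm_lt_of_forall_mem_sphere_norm_le {F : Type*} [NormedAddCommGroup F]
    [NormedSpace ℂ F] [StrictConvexSpace ℝ F] {f : ℂ → F} {c : ℂ} {r C : ℝ}
    (hd : DiffContOnCl ℂ f (ball c r))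
    (hnc : ¬ ∃ a : F, EqOn f (fun _ => a) (closedBall c r))
    (hle : ∀ x ∈ sphere c r, ‖f x‖ ≤ C) {w : ℂ} (hw : w ∈ ball c r) : ‖f w‖ < C := by
  have hr : r ≠ 0 := (pos_of_mem_ball hw).ne'
  have hle_closure : ∀ x ∈ closure (ball c r), ‖f x‖ ≤ C := fun x =>
    Complex.norm_le_of_forall_mem_frontier_norm_le isBounded_ball hd (by rwa [frontier_ball c hr])
  refine (hle_closure w (subset_closure hw)).lt_of_ne fun hwC => hnc ⟨f w, ?_⟩
  have hmax : IsMaxOn (norm ∘ f) (ball c r) w := fun x hx => by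
    simpa [hwC] using hle_closure x (subset_closure hx)
  have hconst := Complex.eqOn_closure_of_isPreconnected_of_isMaxOn_norm
    (convex_ball c r).isPreconnected isOpen_ball hd hw hmax
  rwa [closure_ball c hr] at hconst

lemma Complex.norm_pow_le_norm_of_mem_annulus {g : ℂ → ℂ} {r : ℝ} {q : ℕ}
    (hg : DifferentiableOn ℂ g (closedBall 0 1)) (hr : 0 < r)
    (hout : ∀ x : ℂ, ‖x‖ = 1 → ‖g x‖ ≤ 1) (hin : ∀ x : ℂ, ‖x‖ = r → ‖g x‖ ^ q ≤ r)
    {w : ℂ} (hw : ‖w‖ ∈ Ioo r 1) : ‖g w‖ ^ q ≤ ‖w‖ := by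
  set A : Set ℂ := norm ⁻¹' Ioo r 1
  have hAo : IsOpen A := isOpen_Ioo.preimage continuous_norm
  have hcl : closure A ⊆ norm ⁻¹' Icc r 1 :=
    closure_minimal (preimage_mono Ioo_subset_Icc_self) (isClosed_Icc.preimage continuous_norm)
  have hfr : ∀ x ∈ frontier A, ‖x‖ = r ∨ ‖x‖ = 1 := by
    intro x hx
    have hx' : ‖x‖ ∈ Icc r 1 \ Ioo r 1 := ⟨hcl hx.1, fun h => hx.2 (by rwa [hAo.interior_eq])⟩
    rwa [Icc_sdiff_Ioo_same (hw.1.trans hw.2).le] at hx'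
  have hne : ∀ x ∈ closure A, x ≠ 0 := fun x hx => norm_pos_iff.mp (hr.trans_le (hcl hx).1)
  have hd : DiffContOnCl ℂ (fun x => g x ^ q / x) A :=
    (((hg.pow q).mono fun x hx => mem_closedBall_zero_iff.mpr (hcl hx).2).div
      differentiableOn_id hne).diffContOnCl
  have hbound : ‖g w ^ q / w‖ ≤ 1 := by
    have hA : Bornology.IsBounded A := (isBounded_ball (x := (0 : ℂ)) (r := 1)).subset fun x hx =>
      mem_ball_zero_iff.mpr hx.2
    refine Complex.norm_le_of_forall_mem_frontier_norm_le hA hd (fun x hx => ?_) (subset_closure hw)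
    rw [norm_div, norm_pow, div_le_one (norm_pos_iff.mpr (hne x (frontier_subset_closure hx)))]
    rcases hfr x hx with h | h
    · exact h ▸ hin x h
    · rw [h]; exact pow_le_one₀ (norm_nonneg _) (hout x h)
  rwa [norm_div, norm_pow, div_le_one (norm_pos_iff.mpr (hne w (subset_closure hw)))] at hbound

lemma hasDerivAt_norm_sq_comp_ofReal_mul {f : ℂ → ℂ} {z : ℂ} (hf : DifferentiableAt ℂ f z) :
    HasDerivAt (fun t : ℝ => ‖f (t * z)‖ ^ 2) (2 * ‖f z‖ ^ 2 * (z * deriv f z / f z).re) 1 := by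
  have hfz : HasDerivAt f (deriv f z) (((1 : ℝ) : ℂ) * z) := by simpa using hf.hasDerivAt
  have hφ : HasDerivAt (fun t : ℝ => f (t * z)) (z * deriv f z) 1 := by
    simpa [mul_comm] using (hfz.comp ((1 : ℝ) : ℂ) (hasDerivAt_mul_const z)).comp_ofReal
  convert hφ.norm_sq using 1
  simp only [Complex.ofReal_one, one_mul]
  rcases eq_or_ne (f z) 0 with h | h
  · simp [h]
  have key : (‖f z‖ ^ 2 : ℂ) * (z * deriv f z / f z) = z * deriv f z * conj (f z) := by
    rw [← Complex.mul_conj']; field_simp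
  rw [Complex.inner, ← key, ← Complex.ofReal_pow, Complex.re_ofReal_mul, mul_assoc]

lemma one_le_mul_re_of_eventually_norm_pow_le {f : ℂ → ℂ} {z : ℂ} {q : ℕ}
    (hf : DifferentiableAt ℂ f z) (hz : ‖f z‖ = 1)
    (hle : ∀ᶠ t : ℝ in 𝓝[<] 1, ‖f (t * z)‖ ^ q ≤ t) : 1 ≤ q * (z * deriv f z / f z).re := by
  have hv : HasDerivAt (fun t : ℝ => (‖f (t * z)‖ ^ 2) ^ q - t ^ 2)
      (q * (2 * (z * deriv f z / f z).re) - 2) 1 := by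
    refine (((hasDerivAt_norm_sq_comp_ofReal_mul hf).fun_pow q).fun_sub
      (hasDerivAt_pow 2 1)).congr_deriv ?_
    simp [hz]
  have hv_le : ∀ᶠ t : ℝ in 𝓝[<] 1, (‖f (t * z)‖ ^ 2) ^ q - t ^ 2 ≤ (‖f z‖ ^ 2) ^ q - 1 ^ 2 := by
    filter_upwards [hle, Ioo_mem_nhdsLT zero_lt_one] with t ht ht0
    have hsq : (‖f (t * z)‖ ^ 2) ^ q = (‖f (t * z)‖ ^ q) ^ 2 := by ring
    rw [hz, hsq, one_pow, one_pow]
    nlinarith [pow_le_pow_left₀ (by positivity) ht 2]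
  linarith [hv.nonneg_of_eventually_le_left (by simpa using hv_le)]

theorem arg_strictly_increasing_on_circle_general (f : ℂ → ℂ) (U : Set ℂ)
    (hcl : closure (ball (0 : ℂ) 1) ⊆ U) (hf : AnalyticOnNhd ℂ f U)
    (hnc : ¬ ∃ c : ℂ, Set.EqOn f (fun _ => c) (closure (ball (0 : ℂ) 1)))
    (hmod : ∀ z : ℂ, ‖z‖ = 1 → ‖f z‖ = 1) :
    ∀ z : ℂ, ‖z‖ = 1 → 0 < (z * deriv f z / f z).re := by
  rw [closure_ball 0 one_ne_zero] at hcl hnc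
  have hdiff : DifferentiableOn ℂ f (closedBall 0 1) := fun w hw =>
    (hf w (hcl hw)).differentiableAt.differentiableWithinAt
  have hlt : ∀ w ∈ ball (0 : ℂ) 1, ‖f w‖ < 1 := fun w =>
    Complex.norm_lt_of_forall_mem_sphere_norm_le
      (DifferentiableOn.diffContOnCl (by rwa [closure_ball _ one_ne_zero])) hnc
      (fun x hx => (hmod x (mem_sphere_zero_iff_norm.mp hx)).le)
  obtain ⟨q, hq⟩ := (isCompact_sphere (0 : ℂ) (1 / 2)).exists_pow_norm_le
    (hdiff.continuousOn.mono
      (sphere_subset_closedBall.trans (closedBall_subset_closedBall (by norm_num))))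
    (fun x hx => hlt x (mem_ball_zero_iff.mpr (by rw [mem_sphere_zero_iff_norm.mp hx]; norm_num)))
    (by norm_num : (0 : ℝ) < 1 / 2)
  intro z hz
  have hradial : ∀ᶠ t : ℝ in 𝓝[<] 1, ‖f (t * z)‖ ^ q ≤ t := by
    filter_upwards [Ioo_mem_nhdsLT (by norm_num : (1 / 2 : ℝ) < 1)] with t ht
    have htz : ‖(t : ℂ) * z‖ = t := by simp [hz, abs_of_pos (by linarith [ht.1] : (0 : ℝ) < t)]
    exact (Complex.norm_pow_le_norm_of_mem_annulus hdiff (by norm_num) (fun x hx => (hmod x hx).le)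
      (fun x hx => hq x (mem_sphere_zero_iff_norm.mpr hx)) (by rwa [htz])).trans_eq htz
  have hzU : z ∈ U := hcl (mem_closedBall_zero_iff.mpr hz.le)
  exact pos_of_mul_pos_right (one_pos.trans_le (one_le_mul_re_of_eventually_norm_pow_le
    (hf z hzU).differentiableAt (hmod z hz) hradial)) q.cast_nonneg

theorem arg_strictly_increasing_on_circle (f : ℂ → ℂ) (U : Set ℂ) (hU : IsOpen U)
    (hcl : closure (ball (0 : ℂ) 1) ⊆ U) (hf : AnalyticOnNhd ℂ f U)
    (hnc : ¬ ∃ c : ℂ, Set.EqOn f (fun _ => c) (closure (ball (0 : ℂ) 1)))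
    (hmod : ∀ z : ℂ, ‖z‖ = 1 → ‖f z‖ = 1)
    (hder : ∀ z : ℂ, ‖z‖ = 1 → deriv f z ≠ 0) :
    ∀ z : ℂ, ‖z‖ = 1 → 0 < (z * deriv f z / f z).re :=
  arg_strictly_increasing_on_circle_general f U hcl hf hnc hmod
end

section
/- Let B be a finite Blaschke product of degree n ≥ 1. Then B has exactly n - 1 critical points in the open unit disk, counted with multiplicity. -/
/-!
Write `B = c p / q` with `p = ∏ (z - aᵢ)` and `q = ∏ (1 - āᵢ z)`. Then `B' = c W / q²` where
`W = p' q - p q' = ∑ᵢ (1 - |aᵢ|²) ∏_{j ≠ i} (z - aⱼ)(1 - āⱼ z)`, and `q` has no zeros in the closed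
disk, so the critical points of `B` in the disk are the zeros of `W` there, with multiplicity.
Each factor `f = (z - a)(1 - ā z)` satisfies `f(z) = z² · conj (f (1 / z̄))`, hence `W` is
self-inversive of degree `2n - 2`: its zeros are symmetric under the reflection `z ↦ 1 / z̄` in the
unit circle, the `2n - 2 - deg W` zeros at `0` mirroring the missing zeros at `∞`. On the circle,
`W(z) z̄ⁿ⁻¹ = ∑ᵢ (1 - |aᵢ|²) ∏_{j ≠ i} |z - aⱼ|² > 0`, so the `2n - 2` zeros split evenly
between the inside and the outside of the disk.
-/

open Polynomial ComplexConjugate Finset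

namespace Polynomial

theorem sum_rootMultiplicity_toFinset_filter_roots {R : Type*} [CommRing R] [IsDomain R]
    [DecidableEq R] (p : R[X]) (P : R → Prop) [DecidablePred P] :
    ∑ z ∈ (p.roots.filter P).toFinset, p.rootMultiplicity z = Multiset.card (p.roots.filter P) := by
  rw [← Multiset.toFinset_sum_count_eq]
  refine Finset.sum_congr rfl fun z hz => ?_
  rw [Multiset.count_filter_of_pos (Multiset.of_mem_filter (Multiset.mem_toFinset.1 hz)),
    count_roots]

theorem roots_multiset_prod_one_sub_C_mul_X {K : Type*} [Field K] [DecidableEq K]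
    (s : Multiset K) :
    (s.map fun r => 1 - C r * X).prod.roots = (s.filter (· ≠ 0)).map (·⁻¹) := by
  have hne : ∀ r : K, (1 : K[X]) - C r * X ≠ 0 := fun r h => by
    simpa using congrArg (eval 0) h
  induction s using Multiset.induction_on with
  | empty => simp
  | cons r s ih =>
    rw [Multiset.map_cons, Multiset.prod_cons, roots_mul, ih, Multiset.filter_cons]
    · by_cases hr : r = 0
      · simp [hr]
      · have hfactor : (1 : K[X]) - C r * X = C (-r) * (X - C r⁻¹) := by
          rw [mul_sub, ← C_mul, neg_mul, mul_inv_cancel₀ hr, C_neg, C_neg, map_one]; ring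
        simp [hfactor, hr]
    · exact mul_ne_zero (hne r) (Multiset.prod_ne_zero (by simpa using fun x _ => hne x))

section Analytic

variable {𝕜 : Type*} [NontriviallyNormedField 𝕜]

theorem hasDerivAt_eval_div_eval (P Q : 𝕜[X]) {z : 𝕜} (hQ : Q.eval z ≠ 0) :
    HasDerivAt (fun w => P.eval w / Q.eval w)
      ((derivative P * Q - P * derivative Q).eval z / Q.eval z ^ 2) z := by
  rw [eval_sub, eval_mul, eval_mul]
  exact (P.hasDerivAt z).div (Q.hasDerivAt z) hQ

theorem exists_eval_mul_eq_pow_rootMultiplicity_mul {P : 𝕜[X]} (hP : P ≠ 0) {h : 𝕜 → 𝕜}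
    {z : 𝕜} (hh : AnalyticAt 𝕜 h z) (hz : h z ≠ 0) :
    ∃ g : 𝕜 → 𝕜, AnalyticAt 𝕜 g z ∧ g z ≠ 0 ∧
      ∀ w, P.eval w * h w = (w - z) ^ P.rootMultiplicity z * g w := by
  let U := P /ₘ (X - C z) ^ P.rootMultiplicity z
  refine ⟨fun w => U.eval w * h w, (AnalyticOnNhd.eval_polynomial U z trivial).mul hh,
    mul_ne_zero (eval_divByMonic_pow_rootMultiplicity_ne_zero z hP) hz, fun w => ?_⟩
  conv_lhs => rw [← pow_mul_divByMonic_rootMultiplicity_eq P z]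
  simp only [eval_mul, eval_pow, eval_sub, eval_X, eval_C, mul_assoc, U]

end Analytic

structure IsSelfInversive (N : ℕ) (p : ℂ[X]) : Prop where
  natDegree_le : p.natDegree ≤ N
  eval_eq : ∀ z ≠ 0, p.eval z = z ^ N * conj (p.eval (conj z)⁻¹)

theorem isSelfInversive_zero (N : ℕ) : IsSelfInversive N 0 :=
  ⟨by simp, fun z _ => by simp⟩

theorem isSelfInversive_C_ofReal (r : ℝ) : IsSelfInversive 0 (C (r : ℂ)) :=
  ⟨by simp, fun z _ => by simp⟩

theorem isSelfInversive_X_sub_C_mul_one_sub_C_mul_X (a : ℂ) :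
    IsSelfInversive 2 ((X - C a) * (1 - C (conj a) * X)) := by
  refine ⟨by compute_degree, fun z hz => ?_⟩
  simp only [eval_mul, eval_sub, eval_X, eval_C, eval_one, map_mul, map_sub, map_one, map_inv₀,
    Complex.conj_conj]
  field_simp

namespace IsSelfInversive

variable {M N : ℕ} {p q : ℂ[X]}

theorem add (hp : IsSelfInversive N p) (hq : IsSelfInversive N q) : IsSelfInversive N (p + q) :=
  ⟨natDegree_add_le_of_degree_le hp.natDegree_le hq.natDegree_le, fun z hz => by
    simp only [eval_add, map_add, hp.eval_eq z hz, hq.eval_eq z hz, mul_add]⟩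

theorem mul (hp : IsSelfInversive M p) (hq : IsSelfInversive N q) :
    IsSelfInversive (M + N) (p * q) :=
  ⟨natDegree_mul_le.trans (add_le_add hp.natDegree_le hq.natDegree_le), fun z hz => by
    simp only [eval_mul, map_mul, hp.eval_eq z hz, hq.eval_eq z hz, pow_add]; ring⟩

theorem sum {ι : Type*} {s : Finset ι} {f : ι → ℂ[X]} (hf : ∀ i ∈ s, IsSelfInversive N (f i)) :
    IsSelfInversive N (∑ i ∈ s, f i) := by
  classical
  induction s using Finset.induction with
  | empty => exact isSelfInversive_zero N
  | insert i s hi ih =>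
    rw [Finset.sum_insert hi]
    exact (hf i (s.mem_insert_self i)).add (ih fun j hj => hf j (Finset.mem_insert_of_mem hj))

theorem prod {ι : Type*} {s : Finset ι} {f : ι → ℂ[X]} {N : ι → ℕ}
    (hf : ∀ i ∈ s, IsSelfInversive (N i) (f i)) :
    IsSelfInversive (∑ i ∈ s, N i) (∏ i ∈ s, f i) := by
  classical
  induction s using Finset.induction with
  | empty => simpa using isSelfInversive_C_ofReal 1
  | insert i s hi ih =>
    rw [Finset.sum_insert hi, Finset.prod_insert hi]
    exact (hf i (s.mem_insert_self i)).mul (ih fun j hj => hf j (Finset.mem_insert_of_mem hj))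

theorem eq_C_mul_X_pow_mul_prod (hp : IsSelfInversive N p) :
    p = C (conj p.leadingCoeff) * X ^ (N - p.natDegree) *
      ((p.roots.map conj).map fun r => 1 - C r * X).prod := by
  refine eq_of_infinite_eval_eq _ _ ((Set.finite_singleton 0).infinite_compl.mono fun z hz => ?_)
  have hz : z ≠ 0 := hz
  have hconj : conj (p.eval (conj z)⁻¹) =
      conj p.leadingCoeff * (p.roots.map fun r => z⁻¹ - conj r).prod := by
    conv_lhs =>
      rw [← C_leadingCoeff_mul_prod_multiset_X_sub_C (IsAlgClosed.card_roots_eq_natDegree (p := p))]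
    simp [eval_multiset_prod, map_multiset_prod, Multiset.map_map]
  have hpow : z ^ N = z ^ (N - p.natDegree) * (p.roots.map fun _ => z).prod := by
    rw [Multiset.map_const', Multiset.prod_replicate, IsAlgClosed.card_roots_eq_natDegree,
      ← pow_add, Nat.sub_add_cancel hp.natDegree_le]
  have hprod : (p.roots.map fun _ => z).prod * (p.roots.map fun r => z⁻¹ - conj r).prod =
      (p.roots.map fun r => 1 - conj r * z).prod := by
    rw [← Multiset.prod_map_mul]
    congr 1
    exact Multiset.map_congr rfl fun r _ => by field_simp
  show p.eval z = _
  rw [hp.eval_eq z hz, hconj, hpow]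
  simp only [eval_mul, eval_C, eval_pow, eval_X, eval_multiset_prod, Multiset.map_map,
    Function.comp_def, eval_sub, eval_one, ← hprod]
  ring

theorem roots_eq_replicate_add_map_inv (hp : IsSelfInversive N p) (hp0 : p ≠ 0) :
    p.roots =
      Multiset.replicate (N - p.natDegree) 0 + ((p.roots.map conj).filter (· ≠ 0)).map (·⁻¹) := by
  have hfac := hp.eq_C_mul_X_pow_mul_prod
  rw [mul_assoc] at hfac
  have hL : conj p.leadingCoeff ≠ 0 := by simpa using hp0
  conv_lhs => rw [hfac]
  rw [roots_C_mul _ hL, roots_mul (right_ne_zero_of_mul (hfac ▸ hp0)), roots_X_pow,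
    Multiset.nsmul_singleton, roots_multiset_prod_one_sub_C_mul_X]

theorem two_mul_card_roots_norm_lt_one (hp : IsSelfInversive N p)
    (hcirc : ∀ z : ℂ, ‖z‖ = 1 → p.eval z ≠ 0) :
    2 * Multiset.card (p.roots.filter (‖·‖ < 1)) = N := by
  have hp0 : p ≠ 0 := fun h => hcirc 1 norm_one (by simp [h])
  have hin_out : Multiset.card (p.roots.filter (‖·‖ < 1)) +
      Multiset.card (p.roots.filter (1 < ‖·‖)) = p.natDegree := by
    rw [← IsAlgClosed.card_roots_eq_natDegree, ← Multiset.card_add]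
    conv_rhs => rw [← Multiset.filter_add_not (‖·‖ < 1) p.roots]
    congr 2
    refine Multiset.filter_congr fun z hz => ?_
    have hz1 : ‖z‖ ≠ 1 := fun h => hcirc z h (isRoot_of_mem_roots hz)
    rw [not_lt]
    exact ⟨le_of_lt, fun h => lt_of_le_of_ne h (Ne.symm hz1)⟩
  have hreflect : Multiset.card (p.roots.filter (‖·‖ < 1)) =
      (N - p.natDegree) + Multiset.card (p.roots.filter (1 < ‖·‖)) := by
    conv_lhs => rw [hp.roots_eq_replicate_add_map_inv hp0]
    rw [Multiset.filter_add, Multiset.card_add, Multiset.filter_map, Multiset.card_map,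
      Multiset.filter_filter, Multiset.filter_map, Multiset.card_map]
    congr 1
    · rw [Multiset.filter_eq_self.2 fun z hz => by
        simp [Multiset.eq_of_mem_replicate hz]]
      exact Multiset.card_replicate _ _
    · congr 1
      refine Multiset.filter_congr fun z _ => ?_
      simp only [Function.comp_apply, norm_inv, Complex.norm_conj, ne_eq, map_eq_zero]
      refine ⟨fun ⟨h, hz⟩ => (inv_lt_one₀ (norm_pos_iff.2 hz)).1 h, fun h => ?_⟩
      exact ⟨inv_lt_one_of_one_lt₀ h, norm_pos_iff.1 (one_pos.trans h)⟩
  have := hp.natDegree_le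
  omega

end IsSelfInversive
end Polynomial

namespace Blaschke

variable {n : ℕ} (a : Fin n → ℂ)

noncomputable def numerator : ℂ[X] := ∏ i, (X - C (a i))

noncomputable def denominator : ℂ[X] := ∏ i, (1 - C (conj (a i)) * X)

noncomputable def criticalPoly : ℂ[X] :=
  ∑ i, C ((1 - ‖a i‖ ^ 2 : ℝ) : ℂ) * ∏ j ∈ univ.erase i, (X - C (a j)) * (1 - C (conj (a j)) * X)

theorem derivative_numerator_mul_sub :
    derivative (numerator a) * denominator a - numerator a * derivative (denominator a) =
      criticalPoly a := by
  rw [numerator, denominator, criticalPoly, derivative_prod_finset, derivative_prod_finset,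
    Finset.sum_mul, Finset.mul_sum, ← Finset.sum_sub_distrib]
  refine Finset.sum_congr rfl fun i _ => ?_
  rw [← Finset.mul_prod_erase _ (fun j => X - C (a j)) (mem_univ i),
    ← Finset.mul_prod_erase _ (fun j => 1 - C (conj (a j)) * X) (mem_univ i),
    Finset.prod_mul_distrib]
  simp only [derivative_one, derivative_X, derivative_C_mul, derivative_C,
    Complex.ofReal_sub, Complex.ofReal_one, Complex.ofReal_pow, ← Complex.conj_mul', map_sub,
    map_one, map_mul]
  ring

theorem isSelfInversive_criticalPoly : (criticalPoly a).IsSelfInversive (2 * (n - 1)) :=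
  IsSelfInversive.sum fun i _ => by
    have := (isSelfInversive_C_ofReal (1 - ‖a i‖ ^ 2)).mul
      (IsSelfInversive.prod (s := univ.erase i) (N := fun _ => 2) fun j _ =>
        isSelfInversive_X_sub_C_mul_one_sub_C_mul_X (a j))
    rwa [zero_add, sum_const, card_erase_of_mem (mem_univ i), card_univ, Fintype.card_fin,
      smul_eq_mul, mul_comm] at this

theorem eval_criticalPoly_ne_zero_of_norm_eq_one (hn : 1 ≤ n) (ha : ∀ i, ‖a i‖ < 1) {z : ℂ}
    (hz : ‖z‖ = 1) :
    (criticalPoly a).eval z ≠ 0 := by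
  -- on the circle `z̄ = z⁻¹`, which turns each factor of `criticalPoly` times `z̄` into `|z - b|²`
  have hfactor : ∀ b : ℂ, (z - b) * (1 - conj b * z) * conj z = ((‖z - b‖ ^ 2 : ℝ) : ℂ) := by
    intro b
    have hzz : z * conj z = 1 := by rw [Complex.mul_conj', hz]; simp
    rw [Complex.ofReal_pow, ← Complex.mul_conj', map_sub]
    linear_combination (-(z - b) * conj b) * hzz
  have hsum : (criticalPoly a).eval z * conj z ^ (n - 1) =
      ((∑ i, (1 - ‖a i‖ ^ 2) * ∏ j ∈ univ.erase i, ‖z - a j‖ ^ 2 : ℝ) : ℂ) := by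
    simp only [criticalPoly, eval_finsetSum, eval_mul, eval_C, eval_prod, eval_sub, eval_X,
      eval_one, sum_mul, Complex.ofReal_sum, Complex.ofReal_mul, Complex.ofReal_prod]
    refine sum_congr rfl fun i _ => ?_
    have hcard : conj z ^ (n - 1) = ∏ _j ∈ univ.erase i, conj z := by
      rw [prod_const, card_erase_of_mem (mem_univ i), card_univ, Fintype.card_fin]
    rw [mul_assoc, hcard, ← prod_mul_distrib]
    exact congrArg _ (prod_congr rfl fun j _ => hfactor (a j))
  have hpos : 0 < ∑ i, (1 - ‖a i‖ ^ 2) * ∏ j ∈ univ.erase i, ‖z - a j‖ ^ 2 := by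
    refine sum_pos (fun i _ => mul_pos ?_ (prod_pos fun j _ => ?_)) (univ_nonempty_iff.2 ⟨⟨0, hn⟩⟩)
    · nlinarith [ha i, norm_nonneg (a i)]
    · exact pow_pos (norm_pos_iff.2 (sub_ne_zero.2 fun h => (ha j).ne (by rwa [← h]))) 2
  intro h
  rw [h, zero_mul] at hsum
  exact hpos.ne' (Complex.ofReal_eq_zero.1 hsum.symm)

theorem eval_denominator_ne_zero (ha : ∀ i, ‖a i‖ < 1) {z : ℂ} (hz : ‖z‖ ≤ 1) :
    (denominator a).eval z ≠ 0 := by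
  rw [denominator, eval_prod]
  refine prod_ne_zero_iff.2 fun i _ => ?_
  have : ‖conj (a i) * z‖ < 1 := by
    rw [norm_mul, Complex.norm_conj]
    exact mul_lt_one_of_nonneg_of_lt_one_left (norm_nonneg _) (ha i) hz
  simp only [eval_sub, eval_one, eval_mul, eval_C, eval_X, sub_ne_zero]
  exact fun h => by simp [← h] at this

theorem deriv_eq_eval_criticalPoly_mul (ha : ∀ i, ‖a i‖ < 1) {c : ℂ} {B : ℂ → ℂ}
    (hB : ∀ z, B z = c * ∏ i, (z - a i) / (1 - conj (a i) * z)) {z : ℂ} (hz : ‖z‖ < 1) :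
    deriv B z = (criticalPoly a).eval z * (c / (denominator a).eval z ^ 2) := by
  have hBeq : B = fun w => c * ((numerator a).eval w / (denominator a).eval w) := funext fun w => by
    rw [hB, numerator, denominator, eval_prod, eval_prod, ← prod_div_distrib]
    simp
  have hderiv := (hasDerivAt_eval_div_eval (numerator a) _
    (eval_denominator_ne_zero a ha hz.le)).const_mul c
  rw [hBeq, hderiv.deriv, derivative_numerator_mul_sub]
  ring

theorem deriv_eq_zero_iff (ha : ∀ i, ‖a i‖ < 1) {c : ℂ} (hc : c ≠ 0) {B : ℂ → ℂ}
    (hB : ∀ z, B z = c * ∏ i, (z - a i) / (1 - conj (a i) * z)) {z : ℂ} (hz : ‖z‖ < 1) :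
    deriv B z = 0 ↔ (criticalPoly a).eval z = 0 := by
  rw [deriv_eq_eval_criticalPoly_mul a ha hB hz, mul_eq_zero,
    or_iff_left (div_ne_zero hc (pow_ne_zero 2 (eval_denominator_ne_zero a ha hz.le)))]

end Blaschke

open Blaschke

open Set Metric

theorem blaschke_critical_points_count (n : ℕ) (hn : 1 ≤ n) (c : ℂ) (a : Fin n → ℂ)
    (hc : ‖c‖ = 1) (ha : ∀ i, ‖a i‖ < 1)
    (B : ℂ → ℂ)
    (hB : ∀ z : ℂ, B z = c * ∏ i, (z - a i) / (1 - (starRingEnd ℂ) (a i) * z)) :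
    ∃ (Z : Finset ℂ) (m : ℂ → ℕ),
      (↑Z = {z ∈ ball (0 : ℂ) 1 | deriv B z = 0}) ∧
      (∀ z ∈ Z, ∃ g : ℂ → ℂ, AnalyticAt ℂ g z ∧ g z ≠ 0 ∧
        ∀ᶠ w in nhds z, deriv B w = (w - z) ^ (m z) * g w) ∧
      ∑ z ∈ Z, m z = n - 1 := by
  have hc0 : c ≠ 0 := norm_ne_zero_iff.1 (hc ▸ one_ne_zero)
  have hcirc : ∀ z : ℂ, ‖z‖ = 1 → (criticalPoly a).eval z ≠ 0 :=
    fun z => eval_criticalPoly_ne_zero_of_norm_eq_one a hn ha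
  have hW0 : criticalPoly a ≠ 0 := fun h => hcirc 1 norm_one (by simp [h])
  refine ⟨((criticalPoly a).roots.filter (‖·‖ < 1)).toFinset, (criticalPoly a).rootMultiplicity,
    ?_, fun z hz => ?_, ?_⟩
  · ext z
    simp only [Finset.mem_coe, Multiset.mem_toFinset, Multiset.mem_filter, mem_roots hW0,
      IsRoot.def, mem_ball_zero_iff, and_comm (b := ‖z‖ < 1)]
    exact and_congr_right fun hz => (deriv_eq_zero_iff a ha hc0 hB hz).symm
  · have hz : z ∈ ball (0 : ℂ) 1 :=
      mem_ball_zero_iff.2 (Multiset.mem_filter.1 (Multiset.mem_toFinset.1 hz)).2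
    have hden : (denominator a).eval z ^ 2 ≠ 0 :=
      pow_ne_zero 2 (eval_denominator_ne_zero a ha (mem_ball_zero_iff.1 hz).le)
    obtain ⟨g, hg, hgz, hfactor⟩ := exists_eval_mul_eq_pow_rootMultiplicity_mul hW0
      (analyticAt_const.div ((AnalyticOnNhd.eval_polynomial _ z trivial).pow 2) hden)
      (div_ne_zero hc0 hden)
    exact ⟨g, hg, hgz, Filter.eventually_of_mem (isOpen_ball.mem_nhds hz) fun w hw =>
      (deriv_eq_eval_criticalPoly_mul a ha hB (mem_ball_zero_iff.1 hw)).trans (hfactor w)⟩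
  · rw [sum_rootMultiplicity_toFinset_filter_roots]
    have := (isSelfInversive_criticalPoly a).two_mul_card_roots_norm_lt_one hcirc
    omega
end

section
/- Let f be analytic on an open set containing the closed unit disk with |f| = 1 on the unit circle, and suppose f has exactly one distinct zero z₀ in 𝔻, of multiplicity k. Then there exists an injective analytic map φ : 𝔻 → ℂ with φ(z₀) = 0 such that f(z) = φ(z)^k for all z ∈ 𝔻, and the image φ(𝔻) is the open unit disk. -/
/-!
Write `B(z) = (z - z₀) / (1 - conj z₀ * z)` for the Blaschke factor, which maps the unit disk
bijectively onto itself and has modulus one on the unit circle. The function `f / B ^ k` equals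
`g * (1 - conj z₀ * z) ^ k` on the disk, so it has no zeros there, and it is analytic on a
neighbourhood of the closed disk with modulus one on the circle. By the maximum modulus principle,
applied to it and to its reciprocal, it has modulus one on the disk, hence is a unimodular
constant `c`. Then `φ = l * B` with `l ^ k = c` works.
-/

open Set Metric

open Complex ComplexConjugate Function Topology

noncomputable def blaschkeFactor (a z : ℂ) : ℂ := (z - a) / (1 - conj a * z)

section BlaschkeFactor

variable {a z : ℂ}

lemma one_sub_conj_mul_ne_zero (ha : ‖a‖ < 1) (hz : ‖z‖ ≤ 1) : 1 - conj a * z ≠ 0 := by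
  refine sub_ne_zero.2 fun h => ?_
  have : ‖conj a * z‖ < 1 := by
    rw [norm_mul, RCLike.norm_conj]
    nlinarith [norm_nonneg a, norm_nonneg z]
  simp [← h] at this

@[simp]
lemma blaschkeFactor_self (a : ℂ) : blaschkeFactor a a = 0 := by
  simp [blaschkeFactor]

lemma analyticOnNhd_blaschkeFactor (ha : ‖a‖ < 1) :
    AnalyticOnNhd ℂ (blaschkeFactor a) (closedBall 0 1) := fun _ hz =>
  (analyticAt_id.sub analyticAt_const).div
    (analyticAt_const.sub (analyticAt_const.mul analyticAt_id))
    (one_sub_conj_mul_ne_zero ha (mem_closedBall_zero_iff.1 hz))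

lemma normSq_one_sub_conj_mul_sub_normSq_sub (a z : ℂ) :
    normSq (1 - conj a * z) - normSq (z - a) = (1 - normSq z) * (1 - normSq a) := by
  simp only [normSq_apply, sub_re, sub_im, mul_re, mul_im, one_re, one_im, conj_re, conj_im]
  ring

lemma norm_blaschkeFactor_lt_one (ha : ‖a‖ < 1) (hz : ‖z‖ < 1) : ‖blaschkeFactor a z‖ < 1 := by
  have hd := one_sub_conj_mul_ne_zero ha hz.le
  rw [blaschkeFactor, norm_div, div_lt_one (norm_pos_iff.2 hd),
    ← sq_lt_sq₀ (norm_nonneg _) (norm_nonneg _), Complex.sq_norm, Complex.sq_norm, ← sub_pos,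
    normSq_one_sub_conj_mul_sub_normSq_sub, ← Complex.sq_norm, ← Complex.sq_norm]
  have := pow_lt_one₀ (norm_nonneg z) hz two_ne_zero
  have := pow_lt_one₀ (norm_nonneg a) ha two_ne_zero
  apply mul_pos <;> linarith

lemma blaschkeFactor_neg_blaschkeFactor (ha : ‖a‖ < 1) (hz : ‖z‖ ≤ 1) :
    blaschkeFactor (-a) (blaschkeFactor a z) = z := by
  have hd := one_sub_conj_mul_ne_zero ha hz
  have hd' : 1 - conj a * a ≠ 0 := one_sub_conj_mul_ne_zero ha ha.le
  have hnum : (z - a) / (1 - conj a * z) - -a = z * (1 - conj a * a) / (1 - conj a * z) := by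
    rw [eq_div_iff hd, sub_mul, div_mul_cancel₀ _ hd]
    ring
  have hden : 1 - conj (-a) * ((z - a) / (1 - conj a * z)) =
      (1 - conj a * a) / (1 - conj a * z) := by
    rw [eq_div_iff hd, sub_mul, mul_assoc, div_mul_cancel₀ _ hd, map_neg]
    ring
  rw [blaschkeFactor, blaschkeFactor, hnum, hden, div_div_div_cancel_right₀ hd,
    mul_div_cancel_right₀ _ hd']

lemma bijOn_blaschkeFactor (ha : ‖a‖ < 1) :
    BijOn (blaschkeFactor a) (ball 0 1) (ball 0 1) := by
  have ha' : ‖-a‖ < 1 := by rwa [norm_neg]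
  refine InvOn.bijOn (f' := blaschkeFactor (-a)) ⟨fun z hz => ?_, fun z hz => ?_⟩
    (fun z hz => ?_) (fun z hz => ?_) <;> rw [mem_ball_zero_iff] at hz
  · exact blaschkeFactor_neg_blaschkeFactor ha hz.le
  · simpa using blaschkeFactor_neg_blaschkeFactor ha' hz.le
  · exact mem_ball_zero_iff.2 (norm_blaschkeFactor_lt_one ha hz)
  · exact mem_ball_zero_iff.2 (norm_blaschkeFactor_lt_one ha' hz)

end BlaschkeFactor

lemma bijOn_mul_left_ball {𝕜 : Type*} [NormedDivisionRing 𝕜] {l : 𝕜} (hl : ‖l‖ = 1) (r : ℝ) :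
    BijOn (l * ·) (ball 0 r) (ball 0 r) := by
  have hl₀ : l ≠ 0 := norm_ne_zero_iff.1 (hl ▸ one_ne_zero)
  refine InvOn.bijOn (f' := (l⁻¹ * ·)) ⟨fun z _ => ?_, fun z _ => ?_⟩ (fun z hz => ?_)
    (fun z hz => ?_) <;> simp_all

section MaximumModulus

variable {E : Type*} [NormedAddCommGroup E] [NormedSpace ℂ E] [Nontrivial E]
  {F : E → ℂ} {U : Set E}

lemma norm_eq_one_of_forall_mem_frontier_norm_eq_one (hU : Bornology.IsBounded U)
    (hd : DiffContOnCl ℂ F U) (hne : ∀ z ∈ U, F z ≠ 0) (h₁ : ∀ z ∈ frontier U, ‖F z‖ = 1)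
    {z : E} (hz : z ∈ closure U) :
    ‖F z‖ = 1 := by
  have hne' : ∀ z ∈ closure U, F z ≠ 0 := by
    rw [closure_eq_self_union_frontier]
    rintro z (hz | hz)
    exacts [hne z hz, norm_ne_zero_iff.1 (h₁ z hz ▸ one_ne_zero)]
  refine le_antisymm
    (norm_le_of_forall_mem_frontier_norm_le hU hd (fun w hw => (h₁ w hw).le) hz) ?_
  have := norm_le_of_forall_mem_frontier_norm_le hU (hd.inv hne')
    (fun w hw => by rw [Pi.inv_apply, norm_inv, h₁ w hw, inv_one]) hz
  rwa [Pi.inv_apply, norm_inv, inv_le_one₀ (norm_pos_iff.2 (hne' z hz))] at this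

lemma eqOn_const_of_forall_mem_frontier_norm_eq_one (hU : Bornology.IsBounded U)
    (hc : IsPreconnected U) (ho : IsOpen U) (hd : DiffContOnCl ℂ F U) (hne : ∀ z ∈ U, F z ≠ 0)
    (h₁ : ∀ z ∈ frontier U, ‖F z‖ = 1) {c : E} (hcU : c ∈ U) :
    ‖F c‖ = 1 ∧ EqOn F (const E (F c)) U := by
  have hU₁ : ∀ z ∈ U, ‖F z‖ = 1 := fun z hz =>
    norm_eq_one_of_forall_mem_frontier_norm_eq_one hU hd hne h₁ (subset_closure hz)
  refine ⟨hU₁ c hcU, eqOn_of_isPreconnected_of_isMaxOn_norm hc ho hd.differentiableOn hcU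
    fun z hz => ?_⟩
  simp [hU₁ z hz, hU₁ c hcU]

end MaximumModulus

lemma AnalyticOnNhd.update_of_eqOn {𝕜 E F : Type*} [NontriviallyNormedField 𝕜]
    [NormedAddCommGroup E] [NormedSpace 𝕜 E] [NormedAddCommGroup F] [NormedSpace 𝕜 F]
    [DecidableEq E] {f g : E → F} {s t : Set E} {a : E} (hf : AnalyticOnNhd 𝕜 f (s \ {a}))
    (hg : AnalyticOnNhd 𝕜 g t) (ht : t ∈ 𝓝 a) (hfg : EqOn f g (t \ {a})) :
    AnalyticOnNhd 𝕜 (update f a (g a)) (insert a s) ∧ EqOn (update f a (g a)) g t := by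
  have heq : EqOn (update f a (g a)) g t := fun z hz => by
    rcases eq_or_ne z a with rfl | hza
    · exact update_self ..
    · rw [update_of_ne hza]; exact hfg ⟨hz, hza⟩
  refine ⟨fun z hz => ?_, heq⟩
  rcases eq_or_ne z a with rfl | hza
  · exact (hg z (mem_of_mem_nhds ht)).congr (heq.eventuallyEq_of_mem ht).symm
  · exact (hf z ⟨hz.resolve_left hza, hza⟩).congr
      ((eventually_ne_nhds hza).mono fun w hw => (update_of_ne hw ..).symm)

section UnimodularOnCircle

variable {f g : ℂ → ℂ} {U : Set ℂ} {z₀ : ℂ} {k : ℕ}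

lemma exists_analyticOnNhd_closedBall_eqOn_norm_sphere_eq_one
    (hcl : closure (ball (0 : ℂ) 1) ⊆ U) (hf : AnalyticOnNhd ℂ f U)
    (hmod : ∀ z : ℂ, ‖z‖ = 1 → ‖f z‖ = 1) (hz₀ : z₀ ∈ ball (0 : ℂ) 1)
    (hg : AnalyticOnNhd ℂ g (ball (0 : ℂ) 1))
    (hfac : ∀ z ∈ ball (0 : ℂ) 1, f z = (z - z₀) ^ k * g z) :
    ∃ H : ℂ → ℂ, AnalyticOnNhd ℂ H (closedBall 0 1) ∧
      EqOn H (fun z => g z * (1 - conj z₀ * z) ^ k) (ball 0 1) ∧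
      ∀ z ∈ sphere (0 : ℂ) 1, ‖H z‖ = 1 := by
  classical
  -- `canonicalFactor 1 z₀` is `(blaschkeFactor z₀)⁻¹` away from `z₀`
  obtain ⟨hHa, hHeq⟩ := AnalyticOnNhd.update_of_eqOn (s := U)
    (f := fun z => f z * canonicalFactor 1 z₀ z ^ k) (g := fun z => g z * (1 - conj z₀ * z) ^ k)
    (fun z hz => (hf z hz.1).mul ((analyticOnNhd_canonicalFactor 1 z₀ z hz.2).pow k))
    (fun z hz => (hg z hz).mul ((analyticAt_const.sub (analyticAt_const.mul analyticAt_id)).pow k))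
    (isOpen_ball.mem_nhds hz₀) fun z hz => by
      have hzz₀ : z - z₀ ≠ 0 := sub_ne_zero.2 hz.2
      simp only [canonicalFactor_apply, hfac z hz.1, ofReal_one, one_pow, one_mul, div_pow]
      field_simp
  refine ⟨_, hHa.mono ((closure_ball (0 : ℂ) one_ne_zero ▸ hcl).trans (subset_insert _ _)), hHeq,
    fun z hz => ?_⟩
  have hz₁ := mem_sphere_zero_iff_norm.1 hz
  have hzz₀ : z ≠ z₀ := by
    rintro rfl
    exact (mem_ball_zero_iff.1 hz₀).ne hz₁
  rw [update_of_ne hzz₀, norm_mul, norm_pow, hmod z hz₁,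
    norm_canonicalFactor_eval_circle_eq_one hz₀ hz, one_pow, one_mul]

lemma exists_eq_const_mul_blaschkeFactor_pow
    (hcl : closure (ball (0 : ℂ) 1) ⊆ U) (hf : AnalyticOnNhd ℂ f U)
    (hmod : ∀ z : ℂ, ‖z‖ = 1 → ‖f z‖ = 1) (hz₀ : z₀ ∈ ball (0 : ℂ) 1)
    (hg : AnalyticOnNhd ℂ g (ball (0 : ℂ) 1)) (hgne : ∀ z ∈ ball (0 : ℂ) 1, g z ≠ 0)
    (hfac : ∀ z ∈ ball (0 : ℂ) 1, f z = (z - z₀) ^ k * g z) :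
    ∃ c : ℂ, ‖c‖ = 1 ∧ ∀ z ∈ ball (0 : ℂ) 1, f z = c * blaschkeFactor z₀ z ^ k := by
  have hden : ∀ z ∈ ball (0 : ℂ) 1, 1 - conj z₀ * z ≠ 0 := fun z hz =>
    one_sub_conj_mul_ne_zero (mem_ball_zero_iff.1 hz₀) (mem_ball_zero_iff.1 hz).le
  obtain ⟨H, hHa, hHeq, hH₁⟩ :=
    exists_analyticOnNhd_closedBall_eqOn_norm_sphere_eq_one hcl hf hmod hz₀ hg hfac
  obtain ⟨hc, hconst⟩ := eqOn_const_of_forall_mem_frontier_norm_eq_one isBounded_ball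
    (convex_ball 0 1).isPreconnected isOpen_ball
    (hHa.differentiableOn.diffContOnCl_ball subset_rfl)
    (fun z hz => hHeq hz ▸ mul_ne_zero (hgne z hz) (pow_ne_zero _ (hden z hz)))
    (frontier_ball (0 : ℂ) one_ne_zero ▸ hH₁) hz₀
  refine ⟨H z₀, hc, fun z hz => ?_⟩
  have hHz : H z = H z₀ := hconst hz
  have : 1 - z * conj z₀ ≠ 0 := mul_comm z (conj z₀) ▸ hden z hz
  rw [← hHz, hHeq hz, hfac z hz, blaschkeFactor, div_pow]
  field_simp

end UnimodularOnCircle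

theorem single_zero_power_model_general (f g : ℂ → ℂ) (U : Set ℂ)
    (hcl : closure (ball (0 : ℂ) 1) ⊆ U) (hf : AnalyticOnNhd ℂ f U)
    (hmod : ∀ z : ℂ, ‖z‖ = 1 → ‖f z‖ = 1)
    (z₀ : ℂ) (hz₀ : z₀ ∈ ball (0 : ℂ) 1) (k : ℕ) (hk : 1 ≤ k)
    (hg : AnalyticOnNhd ℂ g (ball (0 : ℂ) 1))
    (hgne : ∀ z ∈ ball (0 : ℂ) 1, g z ≠ 0)
    (hfac : ∀ z ∈ ball (0 : ℂ) 1, f z = (z - z₀) ^ k * g z) :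
    ∃ φ : ℂ → ℂ, AnalyticOnNhd ℂ φ (ball (0 : ℂ) 1) ∧
      Set.InjOn φ (ball (0 : ℂ) 1) ∧ φ z₀ = 0 ∧
      (∀ z ∈ ball (0 : ℂ) 1, f z = φ z ^ k) ∧
      φ '' ball (0 : ℂ) 1 = ball (0 : ℂ) 1 := by
  have hz₀' : ‖z₀‖ < 1 := mem_ball_zero_iff.1 hz₀
  obtain ⟨c, hc, hfc⟩ := exists_eq_const_mul_blaschkeFactor_pow hcl hf hmod hz₀ hg hgne hfac
  obtain ⟨l, rfl⟩ := IsAlgClosed.exists_pow_nat_eq c hk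
  have hl : ‖l‖ = 1 := by
    rwa [norm_pow, pow_eq_one_iff_of_nonneg (norm_nonneg _) (by omega)] at hc
  have hφ : BijOn (fun z => l * blaschkeFactor z₀ z) (ball 0 1) (ball 0 1) :=
    (bijOn_mul_left_ball hl 1).comp (bijOn_blaschkeFactor hz₀')
  refine ⟨fun z => l * blaschkeFactor z₀ z, fun z hz => ?_, hφ.injOn, by simp,
    fun z hz => by rw [hfc z hz, mul_pow], hφ.image_eq⟩
  exact analyticAt_const.mul (analyticOnNhd_blaschkeFactor hz₀' z (ball_subset_closedBall hz))

theorem single_zero_power_model (f g : ℂ → ℂ) (U : Set ℂ) (hU : IsOpen U)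
    (hcl : closure (ball (0 : ℂ) 1) ⊆ U) (hf : AnalyticOnNhd ℂ f U)
    (hmod : ∀ z : ℂ, ‖z‖ = 1 → ‖f z‖ = 1)
    (z₀ : ℂ) (hz₀ : z₀ ∈ ball (0 : ℂ) 1) (k : ℕ) (hk : 1 ≤ k)
    (hg : AnalyticOnNhd ℂ g (ball (0 : ℂ) 1))
    (hgne : ∀ z ∈ ball (0 : ℂ) 1, g z ≠ 0)
    (hfac : ∀ z ∈ ball (0 : ℂ) 1, f z = (z - z₀) ^ k * g z) :
    ∃ φ : ℂ → ℂ, AnalyticOnNhd ℂ φ (ball (0 : ℂ) 1) ∧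
      Set.InjOn φ (ball (0 : ℂ) 1) ∧ φ z₀ = 0 ∧
      (∀ z ∈ ball (0 : ℂ) 1, f z = φ z ^ k) ∧
      φ '' ball (0 : ℂ) 1 = ball (0 : ℂ) 1 :=
  single_zero_power_model_general f g U hcl hf hmod z₀ hz₀ k hk hg hgne hfac
end

section
/- Let p ∈ ℂ[z] be a nonconstant polynomial and ε > 0. Then the lemniscate {z : |p(z)| = ε} is compact, and every bounded connected component of its complement {z : |p(z)| < ε} contains at least one zero of p. -/
open Set

theorem lemniscate_compact_and_components_contain_zero (p : Polynomial ℂ)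
    (hp : 0 < p.degree) (ε : ℝ) (hε : 0 < ε) :
    IsCompact {z : ℂ | ‖p.eval z‖ = ε} ∧
      ∀ z₀ : ℂ, ‖p.eval z₀‖ < ε →
        ∃ w ∈ connectedComponentIn {z : ℂ | ‖p.eval z‖ < ε} z₀, p.eval w = 0 := by
  have hcont : Continuous fun z : ℂ => ‖p.eval z‖ := p.continuous.norm
  -- The closed sublevel set is compact
  have htend : Filter.Tendsto (fun z : ℂ => ‖p.eval z‖) (Filter.cocompact ℂ) Filter.atTop :=
    p.tendsto_norm_atTop hp tendsto_norm_cocompact_atTop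
  have hKle : IsCompact {z : ℂ | ‖p.eval z‖ ≤ ε} := by
    have h1 : {z : ℂ | ε < ‖p.eval z‖} ∈ Filter.cocompact ℂ :=
      htend (Filter.Ioi_mem_atTop ε)
    obtain ⟨K, hK, hKsub⟩ := Filter.mem_cocompact.mp h1
    exact hK.of_isClosed_subset (isClosed_le hcont continuous_const)
      (fun z hz => by
        by_contra hzK
        have h2 : ε < ‖p.eval z‖ := hKsub hzK
        have h3 : ‖p.eval z‖ ≤ ε := hz
        linarith)
  constructor
  · exact hKle.of_isClosed_subset (isClosed_eq hcont continuous_const)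
      (fun z hz => le_of_eq hz)
  · intro z₀ hz₀
    by_cases h0 : p.eval z₀ = 0
    · exact ⟨z₀, mem_connectedComponentIn hz₀, h0⟩
    set S : Set ℂ := {z : ℂ | ‖p.eval z‖ < ε} with hS
    have hSopen : IsOpen S := isOpen_lt hcont continuous_const
    set U := connectedComponentIn S z₀ with hU
    have hUopen : IsOpen U := hSopen.connectedComponentIn
    have hUsub : U ⊆ S := connectedComponentIn_subset S z₀
    have hUbdd : Bornology.IsBounded U :=
      (hKle.isBounded).subset (hUsub.trans fun z hz => show ‖p.eval z‖ ≤ ε from le_of_lt hz)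
    -- closure U ∩ S ⊆ U
    have hclos : closure U ∩ S ⊆ U := by
      rintro x ⟨hxc, hxS⟩
      have hVnhds : connectedComponentIn S x ∈ nhds x :=
        (hSopen.connectedComponentIn).mem_nhds (mem_connectedComponentIn hxS)
      obtain ⟨y, hyU, hyV⟩ := mem_closure_iff_nhds.mp hxc _ hVnhds
      -- hyV : y ∈ U, hyU : y ∈ connectedComponentIn S x ... check order
      have : connectedComponentIn S z₀ = connectedComponentIn S y := connectedComponentIn_eq hyV
      have h2 : connectedComponentIn S x = connectedComponentIn S y := connectedComponentIn_eq hyU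
      rw [hU, this, ← h2]
      exact mem_connectedComponentIn hxS
    -- frontier U ⊆ {‖p‖ = ε}
    have hfront : ∀ z ∈ frontier U, ‖p.eval z‖ = ε := by
      intro z hz
      have hzc : z ∈ closure U := hz.1
      have hznU : z ∉ U := by
        intro hzU
        exact hz.2 (subset_interior_iff_isOpen.mpr hUopen hzU)
      have hle : ‖p.eval z‖ ≤ ε := by
        have : closure U ⊆ closure S := closure_mono hUsub
        have hzS : z ∈ closure S := this hzc
        have : closure S ⊆ {z : ℂ | ‖p.eval z‖ ≤ ε} :=
          closure_minimal (fun w hw => show ‖p.eval w‖ ≤ ε from le_of_lt hw) (isClosed_le hcont continuous_const)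
        exact this hzS
      rcases eq_or_lt_of_le hle with h | h
      · exact h
      · exact absurd (hclos ⟨hzc, h⟩) hznU
    -- Suppose no zero in U; apply minimum modulus via 1/p
    by_contra hno
    push_neg at hno
    have hne : ∀ z ∈ closure U, p.eval z ≠ 0 := by
      intro z hz
      rcases (closure_eq_self_union_frontier U ▸ hz) with h | h
      · exact fun he => hno z h he
      · intro he
        have := hfront z h
        rw [he] at this
        simp at this
        exact absurd this.symm (ne_of_gt hε)
    have hdiff : DiffContOnCl ℂ (fun z => (p.eval z)⁻¹) U := by
      refine ⟨?_, ?_⟩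
      · exact DifferentiableOn.inv
          (p.differentiable.differentiableOn)
          (fun z hz => hne z (subset_closure hz))
      · exact ContinuousOn.inv₀ (p.continuous.continuousOn) hne
    have hbound : ∀ z ∈ frontier U, ‖(p.eval z)⁻¹‖ ≤ ε⁻¹ := by
      intro z hz
      rw [norm_inv, hfront z hz]
    have hz₀U : z₀ ∈ closure U :=
      subset_closure (mem_connectedComponentIn hz₀)
    have := Complex.norm_le_of_forall_mem_frontier_norm_le hUbdd hdiff hbound hz₀U
    rw [norm_inv] at this
    have hpos : 0 < ‖p.eval z₀‖ := norm_pos_iff.mpr h0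
    have : ε ≤ ‖p.eval z₀‖ := by
      rwa [inv_le_inv₀ hpos hε] at this
    linarith
end

section
/- Let f be a nonconstant analytic function on an open connected set G and suppose the level set λ = {z ∈ G : |f(z)| = ε} (ε > 0) is compact and contained in G together with all bounded components of its complement. If f' ≠ 0 at every point of λ, then λ is a disjoint union of finitely many smooth Jordan curves. -/
/-!
Since `f' ≠ 0` on the compact level set `λ`, the restriction of `f` to a compact neighbourhood
of `λ` is a covering map over the circle `|w| = ε`. Hence every `z ∈ λ` lies on a unique lift of
the rotation `t ↦ f z · e^{it}`; these lifts are C¹ with velocity `i f / f'`, and their traces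
partition `λ`. Each trace meets the finite fibre over `ε`, so there are finitely many. Finiteness
of the fibres also makes each lift periodic; its periods form a nontrivial subgroup of `2πℤ`,
and rescaling the least positive period to `2π` parametrizes the trace as a smooth Jordan curve.
-/

open Set Function Complex Topology
open scoped Real

theorem Complex.exp_ofReal_mul_I_eq_one_iff {x : ℝ} :
    exp (x * I) = 1 ↔ ∃ n : ℤ, x = n * (2 * π) := by
  rw [← Circle.coe_exp, Circle.coe_eq_one, Circle.exp_eq_one]

theorem isLocalHomeomorphOn_of_hasStrictDerivAt {𝕜 : Type*} [NontriviallyNormedField 𝕜]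
    [CompleteSpace 𝕜] {f f' : 𝕜 → 𝕜} {s : Set 𝕜} (hf : ∀ x ∈ s, HasStrictDerivAt f (f' x) x)
    (hf' : ∀ x ∈ s, f' x ≠ 0) : IsLocalHomeomorphOn f s := fun x hx =>
  let hx' := (hf x hx).hasStrictFDerivAt_equiv (hf' x hx)
  ⟨hx'.toOpenPartialHomeomorph f, hx'.mem_toOpenPartialHomeomorph_source,
    hx'.toOpenPartialHomeomorph_coe.symm⟩

section Topology

variable {X Y : Type*} [TopologicalSpace X] [TopologicalSpace Y]

theorem isLocalHomeomorphOn_subtypeVal_interior (K : Set X) :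
    IsLocalHomeomorphOn (Subtype.val : K → X) {x | ↑x ∈ interior K} := by
  have hincl := Topology.IsOpenEmbedding.inclusion (interior_subset (s := K))
    (isOpen_interior.preimage continuous_subtype_val)
  have h := IsLocalHomeomorphOn.of_comp_right (s := univ) (g := (Subtype.val : K → X))
    (f := inclusion interior_subset)
    isOpen_interior.isOpenEmbedding_subtypeVal.isLocalHomeomorph.isLocalHomeomorphOn
    hincl.isLocalHomeomorph.isLocalHomeomorphOn
  rwa [image_univ, range_inclusion] at h

theorem IsCompact.isCoveringMapOn_domRestrict [T2Space X] [T2Space Y] {f : X → Y} {K : Set X}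
    {s : Set Y} (hK : IsCompact K) (hf : ContinuousOn f K)
    (hloc : IsLocalHomeomorphOn f (K ∩ f ⁻¹' s)) (hint : K ∩ f ⁻¹' s ⊆ interior K) :
    IsCoveringMapOn (K.domRestrict f) s := by
  have := isCompact_iff_compactSpace.mp hK
  exact .of_isLocalHomeomorphOn hf.domRestrict <| hloc.comp
    ((isLocalHomeomorphOn_subtypeVal_interior K).mono fun x hx => hint ⟨x.2, hx⟩)
    fun x hx => ⟨x.2, hx⟩

theorem IsLocalHomeomorphOn.finite_inter_preimage_singleton [T2Space X] [T1Space Y] {f : X → Y}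
    {s : Set X} (hf : IsLocalHomeomorphOn f s) (hs : IsCompact s) (y : Y) :
    (s ∩ f ⁻¹' {y}).Finite := by
  refine (hs.of_isClosed_subset (hf.continuousOn.preimage_isClosed_of_isClosed hs.isClosed
    isClosed_singleton) inter_subset_left).finite
    (IsDiscrete.of_openPartialHomeomorph f inter_subset_right fun x hx => ?_)
  obtain ⟨e, hx, he⟩ := hf x hx.1
  exact ⟨e, hx, he.symm⟩

end Topology

theorem Function.exists_pos_periodic_injOn_Ico {α β : Type*} [AddCommGroup α] [LinearOrder α]
    [IsOrderedAddMonoid α] [Archimedean α] {γ : α → β}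
    (hshift : ∀ s t, γ s = γ t → Periodic γ (t - s)) {c : α} (hc : c ≠ 0) (hper : Periodic γ c)
    {a : α} (ha : 0 < a) (hisol : ∀ p ∈ Ioo 0 a, ¬ Periodic γ p) :
    ∃ T > 0, Periodic γ T ∧ InjOn γ (Ico 0 T) := by
  let H : AddSubgroup α :=
    { carrier := {p | Periodic γ p}
      zero_mem' := fun x => by rw [add_zero]
      add_mem' := Periodic.add_period
      neg_mem' := Periodic.neg }
  have hbot : H ≠ ⊥ :=
    H.ne_bot_iff_exists_ne_zero.2 ⟨⟨c, hper⟩, fun h => hc (congrArg Subtype.val h)⟩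
  obtain ⟨T, ⟨hTper, hT⟩, hTmin⟩ := AddSubgroup.exists_isLeast_pos hbot ha
    (disjoint_left.2 fun p hp hpa => hisol p hpa hp)
  refine ⟨T, hT, hTper, fun s hs t ht hst => ?_⟩
  have hnlt : ∀ s t, s ∈ Ico 0 T → t ∈ Ico 0 T → γ s = γ t → ¬ s < t := fun s t hs ht hst hlt =>
    (hTmin ⟨hshift s t hst, sub_pos.2 hlt⟩).not_gt ((sub_le_self t hs.1).trans_lt ht.2)
  exact le_antisymm (not_lt.1 (hnlt t s ht hs hst.symm)) (not_lt.1 (hnlt s t hs ht hst))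

theorem exists_periodic_two_pi_reparam {E : Type*} [NormedAddCommGroup E] [NormedSpace ℝ E]
    {γ : ℝ → E} {T : ℝ} (hT : 0 < T) (hγ : ContDiff ℝ 1 γ) (hγ' : ∀ t, deriv γ t ≠ 0)
    (hper : Periodic γ T) (hinj : InjOn γ (Ico 0 T)) :
    ∃ δ : ℝ → E, ContDiff ℝ 1 δ ∧ Periodic δ (2 * π) ∧ InjOn δ (Ico 0 (2 * π)) ∧
      (∀ t, deriv δ t ≠ 0) ∧ range δ = range γ := by
  set c := T / (2 * π)
  have hc : 0 < c := by positivity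
  refine ⟨fun t => γ (c * t), hγ.comp (contDiff_const.mul contDiff_id), ?_, ?_, fun t => ?_,
    (mul_left_surjective₀ hc.ne').range_comp γ⟩
  · have h := hper.const_mul c
    rwa [inv_div, div_mul_cancel₀ _ hT.ne'] at h
  · refine hinj.comp (mul_right_injective₀ hc.ne').injOn fun t ht => ⟨mul_nonneg hc.le ht.1, ?_⟩
    calc c * t < c * (2 * π) := mul_lt_mul_of_pos_left ht.2 hc
      _ = T := div_mul_cancel₀ T (by positivity)
  · rw [deriv_comp_mul_left]
    exact smul_ne_zero hc.ne' (hγ' _)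

theorem Set.PairwiseDisjoint.finite_of_forall_inter_nonempty {α : Type*} {𝒞 : Set (Set α)}
    {F : Set α} (hd : 𝒞.PairwiseDisjoint id) (hF : F.Finite)
    (hmeet : ∀ C ∈ 𝒞, (C ∩ F).Nonempty) : 𝒞.Finite := by
  refine (hF.biUnion fun x _ => Subsingleton.finite (s := {C ∈ 𝒞 | x ∈ C}) ?_).subset ?_
  · intro C₁ h₁ C₂ h₂
    by_contra hne
    exact disjoint_left.1 (hd h₁.1 h₂.1 hne) h₁.2 h₂.2
  · intro C hC
    obtain ⟨x, hxC, hxF⟩ := hmeet C hC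
    exact mem_biUnion hxF ⟨hC, hxC⟩

theorem Set.Finite.exists_fin_pairwise_disjoint {α : Type*} {𝒞 : Set (Set α)} (h : 𝒞.Finite)
    (hd : 𝒞.PairwiseDisjoint id) :
    ∃ (n : ℕ) (L : Fin n → Set α), ⋃ i, L i = ⋃₀ 𝒞 ∧
      Pairwise (fun i j => Disjoint (L i) (L j)) ∧ ∀ i, L i ∈ 𝒞 := by
  obtain ⟨n, L, hL⟩ := h.fin_embedding
  refine ⟨n, L, by rw [← sUnion_range, hL], fun i j hij => ?_, fun i => hL ▸ mem_range_self i⟩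
  exact hd (hL ▸ mem_range_self i) (hL ▸ mem_range_self j) (L.injective.ne hij)

def IsCircleLift (f : ℂ → ℂ) (S : Set ℂ) (γ : ℝ → ℂ) : Prop :=
  Continuous γ ∧ (∀ t, γ t ∈ S) ∧ ∀ t, f (γ t) = f (γ 0) * exp (t * I)

namespace IsCircleLift

variable {f : ℂ → ℂ} {S : Set ℂ} {γ γ₁ γ₂ : ℝ → ℂ}

theorem comp_add (h : IsCircleLift f S γ) (s : ℝ) : IsCircleLift f S (fun t => γ (s + t)) := by
  refine ⟨h.1.comp (continuous_const.add continuous_id), fun t => h.2.1 _, fun t => ?_⟩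
  show f (γ (s + t)) = f (γ (s + 0)) * _
  rw [h.2.2 (s + t), h.2.2 (s + 0), add_zero, ofReal_add, add_mul, exp_add, mul_assoc]

theorem eq_comp_add_of_apply_eq (huniq : ∀ z ∈ S, ∃! γ, IsCircleLift f S γ ∧ γ 0 = z)
    (h₁ : IsCircleLift f S γ₁) (h₂ : IsCircleLift f S γ₂) {s : ℝ} (hs : γ₁ s = γ₂ 0) :
    γ₂ = fun t => γ₁ (s + t) :=
  (huniq _ (h₂.2.1 0)).unique ⟨h₂, rfl⟩ ⟨h₁.comp_add s, by rw [add_zero, hs]⟩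

theorem periodic_sub (huniq : ∀ z ∈ S, ∃! γ, IsCircleLift f S γ ∧ γ 0 = z)
    (h : IsCircleLift f S γ) {s t : ℝ} (hst : γ s = γ t) : Periodic γ (t - s) := fun u => by
  have := congrFun (h.eq_comp_add_of_apply_eq huniq (h.comp_add t) (s := s)
    (by rw [hst, add_zero])) (u - s)
  simp only [add_sub_cancel] at this
  rw [← this]
  ring_nf

theorem exists_periodic_injOn (huniq : ∀ z ∈ S, ∃! γ, IsCircleLift f S γ ∧ γ 0 = z)
    (hfin : ∀ w, (S ∩ f ⁻¹' {w}).Finite) (hne : ∀ z ∈ S, f z ≠ 0) (h : IsCircleLift f S γ) :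
    ∃ T > 0, Periodic γ T ∧ InjOn γ (Ico 0 T) := by
  have hfiber (k : ℕ) : γ (2 * π * k) ∈ S ∩ f ⁻¹' {f (γ 0)} := by
    refine ⟨h.2.1 _, ?_⟩
    rw [mem_preimage, h.2.2 (2 * π * k), mem_singleton_iff, mul_eq_left₀ (hne _ (h.2.1 0)),
      exp_ofReal_mul_I_eq_one_iff]
    exact ⟨k, by push_cast; ring⟩
  obtain ⟨a, b, hab, heq⟩ := (hfin _).exists_lt_map_eq_of_forall_mem hfiber
  refine Function.exists_pos_periodic_injOn_Ico (fun s t => h.periodic_sub huniq)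
    ?_ (h.periodic_sub huniq heq) Real.two_pi_pos fun p hp hper => ?_
  · have : (a : ℝ) < b := by exact_mod_cast hab
    nlinarith [Real.pi_pos]
  · have h0 := h.2.2 p
    rw [hper.eq, eq_comm, mul_eq_left₀ (hne _ (h.2.1 0)), exp_ofReal_mul_I_eq_one_iff] at h0
    obtain ⟨n, rfl⟩ := h0
    have h1 : (0 : ℝ) < n := by nlinarith [hp.1, Real.pi_pos]
    have h2 : (n : ℝ) < 1 := by nlinarith [hp.2, Real.pi_pos]
    norm_cast at h1 h2
    omega

theorem hasDerivAt (hf : AnalyticOnNhd ℂ f S) (hreg : ∀ z ∈ S, deriv f z ≠ 0)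
    (h : IsCircleLift f S γ) (t : ℝ) : HasDerivAt γ (I * f (γ t) / deriv f (γ t)) t := by
  have hs := (hf _ (h.2.1 t)).hasStrictDerivAt
  have hne := hreg _ (h.2.1 t)
  have hg := (hs.to_localInverse hne).hasDerivAt
  have hc : HasDerivAt (fun t : ℝ => f (γ 0) * exp (t * I)) (f (γ 0) * (exp (t * I) * I)) t := by
    simpa using ((hasDerivAt_id t).ofReal_comp.mul_const I).cexp.const_mul (f (γ 0))
  have heq : γ =ᶠ[𝓝 t] (hs.localInverse f _ _ hne) ∘ fun t : ℝ => f (γ 0) * exp (t * I) := by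
    filter_upwards [h.1.continuousAt.eventually (hs.eventually_left_inverse hne)] with u hu
    rw [Function.comp_apply, ← h.2.2 u, hu]
  rw [h.2.2 t] at hg
  refine ((hg.comp t hc).congr_of_eventuallyEq heq).congr_deriv ?_
  rw [h.2.2 t]
  field_simp

theorem contDiff (hf : AnalyticOnNhd ℂ f S) (hreg : ∀ z ∈ S, deriv f z ≠ 0)
    (h : IsCircleLift f S γ) : ContDiff ℝ 1 γ := by
  refine contDiff_one_iff_deriv.2 ⟨fun t => (h.hasDerivAt hf hreg t).differentiableAt, ?_⟩
  rw [funext fun t => (h.hasDerivAt hf hreg t).deriv]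
  exact (continuous_const.mul (hf.continuousOn.comp_continuous h.1 h.2.1)).div
    (hf.deriv.continuousOn.comp_continuous h.1 h.2.1) fun t => hreg _ (h.2.1 t)

theorem deriv_ne_zero (hf : AnalyticOnNhd ℂ f S) (hreg : ∀ z ∈ S, deriv f z ≠ 0)
    (hne : ∀ z ∈ S, f z ≠ 0) (h : IsCircleLift f S γ) (t : ℝ) : deriv γ t ≠ 0 := by
  rw [(h.hasDerivAt hf hreg t).deriv]
  exact div_ne_zero (mul_ne_zero I_ne_zero (hne _ (h.2.1 t))) (hreg _ (h.2.1 t))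

end IsCircleLift

theorem existsUnique_isCircleLift {f : ℂ → ℂ} {G S : Set ℂ} {ε : ℝ} (hG : IsOpen G)
    (hf : ContinuousOn f G) (hS : S = {z ∈ G | ‖f z‖ = ε}) (hcpt : IsCompact S)
    (hloc : IsLocalHomeomorphOn f S) {z : ℂ} (hz : z ∈ S) :
    ∃! γ, IsCircleLift f S γ ∧ γ 0 = z := by
  obtain ⟨K, hK, hSK, hKG⟩ := exists_compact_between hcpt hG (hS ▸ fun z hz => hz.1)
  have hKS : K ∩ f ⁻¹' Metric.sphere 0 ε = S := by
    refine subset_antisymm (fun x hx => hS ▸ ⟨hKG hx.1, by simpa using hx.2⟩) fun x hx => ?_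
    exact ⟨interior_subset (hSK hx), by rw [hS] at hx; simpa using hx.2⟩
  have cov : IsCoveringMapOn (K.domRestrict f) (Metric.sphere 0 ε) :=
    hK.isCoveringMapOn_domRestrict (hf.mono hKG) (hKS ▸ hloc) (hKS ▸ hSK)
  have hzε : ‖f z‖ = ε := by rw [hS] at hz; exact hz.2
  let c : C(ℝ, ℂ) := ⟨fun t => f z * exp (t * I), by fun_prop⟩
  obtain ⟨F, ⟨hF0, hF⟩, hFuniq⟩ := cov.existsUnique_continuousMap_lifts c
    (e₀ := ⟨z, interior_subset (hSK hz)⟩) (a₀ := 0) (by simp [c])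
    fun t => by simp [c, norm_exp_ofReal_mul_I, hzε]
  have hFt (t : ℝ) : f (F t) = f z * exp (t * I) := congrFun hF t
  have hFS (t : ℝ) : (F t : ℂ) ∈ S :=
    hKS ▸ ⟨(F t).2, by simp [hFt, norm_exp_ofReal_mul_I, hzε]⟩
  refine ⟨fun t => F t, ⟨⟨by fun_prop, hFS, fun t => ?_⟩, by simp [hF0]⟩, ?_⟩
  · simp [hFt, hF0]
  · rintro γ ⟨hγ, rfl⟩
    have := hFuniq ⟨fun t => ⟨γ t, interior_subset (hSK (hγ.2.1 t))⟩, hγ.1.subtype_mk _⟩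
      ⟨rfl, funext fun t => hγ.2.2 t⟩
    exact funext fun t => congrArg Subtype.val (DFunLike.congr_fun this t)

section CircleLifts

variable {f : ℂ → ℂ} {S : Set ℂ}

theorem pairwiseDisjoint_range_isCircleLift
    (huniq : ∀ z ∈ S, ∃! γ, IsCircleLift f S γ ∧ γ 0 = z) :
    (range '' {γ | IsCircleLift f S γ}).PairwiseDisjoint id := by
  rintro _ ⟨γ₁, h₁, rfl⟩ _ ⟨γ₂, h₂, rfl⟩ hne
  refine disjoint_left.2 ?_
  rintro _ ⟨s, rfl⟩ ⟨t, ht⟩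
  refine hne ?_
  have := (h₂.comp_add t).eq_comp_add_of_apply_eq huniq (h₁.comp_add s) (s := 0)
    (by simp [ht])
  simp only [zero_add] at this
  calc range γ₁ = range (fun u => γ₁ (s + u)) := ((add_left_surjective s).range_comp γ₁).symm
    _ = range (fun u => γ₂ (t + u)) := by rw [this]
    _ = range γ₂ := (add_left_surjective t).range_comp γ₂

theorem sUnion_range_isCircleLift (hex : ∀ z ∈ S, ∃ γ, IsCircleLift f S γ ∧ γ 0 = z) :
    ⋃₀ (range '' {γ | IsCircleLift f S γ}) = S := by
  refine subset_antisymm ?_ fun z hz => ?_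
  · rintro _ ⟨_, ⟨γ, hγ, rfl⟩, t, rfl⟩
    exact hγ.2.1 t
  · obtain ⟨γ, hγ, rfl⟩ := hex z hz
    exact ⟨_, mem_image_of_mem _ hγ, mem_range_self 0⟩

theorem finite_range_isCircleLift {ε : ℝ} (huniq : ∀ z ∈ S, ∃! γ, IsCircleLift f S γ ∧ γ 0 = z)
    (hS : ∀ z ∈ S, ‖f z‖ = ε) (hfin : (S ∩ f ⁻¹' {(ε : ℂ)}).Finite) :
    (range '' {γ | IsCircleLift f S γ}).Finite := by
  refine (pairwiseDisjoint_range_isCircleLift huniq).finite_of_forall_inter_nonempty hfin ?_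
  rintro _ ⟨γ, hγ, rfl⟩
  refine ⟨γ (-arg (f (γ 0))), mem_range_self _, hγ.2.1 _, ?_⟩
  rw [mem_preimage, hγ.2.2, mem_singleton_iff, ← hS _ (hγ.2.1 0)]
  nth_rewrite 1 [← norm_mul_exp_arg_mul_I (f (γ 0))]
  rw [mul_assoc, ← Complex.exp_add, ofReal_neg, neg_mul, add_neg_cancel, Complex.exp_zero, mul_one]

end CircleLifts

theorem regular_level_set_is_finite_union_of_smooth_jordan_curves_general
    (f : ℂ → ℂ) (G : Set ℂ) (hG : IsOpen G)
    (hf : AnalyticOnNhd ℂ f G)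
    (ε : ℝ) (hε : 0 < ε)
    (lam : Set ℂ) (hlam : lam = {z ∈ G | ‖f z‖ = ε}) (hcpt : IsCompact lam)
    (hreg : ∀ z ∈ lam, deriv f z ≠ 0) :
    ∃ (n : ℕ) (L : Fin n → Set ℂ),
      (⋃ i, L i) = lam ∧
      (Pairwise fun i j => Disjoint (L i) (L j)) ∧
      ∀ i, ∃ γ : ℝ → ℂ, ContDiff ℝ 1 γ ∧ Function.Periodic γ (2 * Real.pi) ∧
        Set.InjOn γ (Set.Ico 0 (2 * Real.pi)) ∧ (∀ t, deriv γ t ≠ 0) ∧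
        Set.range γ = L i := by
  have hnorm : ∀ z ∈ lam, ‖f z‖ = ε := fun z hz => by rw [hlam] at hz; exact hz.2
  have hne : ∀ z ∈ lam, f z ≠ 0 := fun z hz => norm_pos_iff.1 (hnorm z hz ▸ hε)
  have hfl : AnalyticOnNhd ℂ f lam := hf.mono (hlam ▸ fun z hz => hz.1)
  have hloc : IsLocalHomeomorphOn f lam :=
    isLocalHomeomorphOn_of_hasStrictDerivAt (fun z hz => (hfl z hz).hasStrictDerivAt) hreg
  have huniq := fun z (hz : z ∈ lam) =>
    existsUnique_isCircleLift hG hf.continuousOn hlam hcpt hloc hz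
  have hfin := hloc.finite_inter_preimage_singleton hcpt
  obtain ⟨n, L, hL, hdisj, hmem⟩ :=
    (finite_range_isCircleLift huniq hnorm (hfin ε)).exists_fin_pairwise_disjoint
      (pairwiseDisjoint_range_isCircleLift huniq)
  refine ⟨n, L, hL.trans (sUnion_range_isCircleLift fun z hz => (huniq z hz).exists), hdisj,
    fun i => ?_⟩
  obtain ⟨γ, hγ, hγL⟩ := hmem i
  obtain ⟨T, hT, hper, hinj⟩ := hγ.exists_periodic_injOn huniq hfin hne
  exact hγL ▸ exists_periodic_two_pi_reparam hT (hγ.contDiff hfl hreg)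
    (hγ.deriv_ne_zero hfl hreg hne) hper hinj

theorem regular_level_set_is_finite_union_of_smooth_jordan_curves
    (f : ℂ → ℂ) (G : Set ℂ) (hG : IsOpen G) (hGconn : IsConnected G)
    (hf : AnalyticOnNhd ℂ f G) (hnc : ¬ ∃ c : ℂ, Set.EqOn f (fun _ => c) G)
    (ε : ℝ) (hε : 0 < ε)
    (lam : Set ℂ) (hlam : lam = {z ∈ G | ‖f z‖ = ε}) (hcpt : IsCompact lam)
    (hfaces : ∀ z : ℂ, z ∉ lam → Bornology.IsBounded (connectedComponentIn lamᶜ z) →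
      connectedComponentIn lamᶜ z ⊆ G)
    (hreg : ∀ z ∈ lam, deriv f z ≠ 0) :
    ∃ (n : ℕ) (L : Fin n → Set ℂ),
      (⋃ i, L i) = lam ∧
      (Pairwise fun i j => Disjoint (L i) (L j)) ∧
      ∀ i, ∃ γ : ℝ → ℂ, ContDiff ℝ 1 γ ∧ Function.Periodic γ (2 * Real.pi) ∧
        Set.InjOn γ (Set.Ico 0 (2 * Real.pi)) ∧ (∀ t, deriv γ t ≠ 0) ∧
        Set.range γ = L i :=
  regular_level_set_is_finite_union_of_smooth_jordan_curves_general f G hG hf ε hε lam hlam hcpt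
    hreg
end

section
/- Let f be analytic on an open set containing the closed unit disk with |f| = 1 on the unit circle, and let D₀ be a bounded connected component of {z ∈ 𝔻 : |f(z)| < δ} for some 0 < δ < 1 whose closure is in 𝔻. Then f restricted to D₀ attains every value of modulus < δ, and the number of zeros of f in D₀ (with multiplicity) is positive. -/
/-!
By the open mapping theorem `f '' D₀` is open, unless `f` is constant on `D₀`; but then `f` is
constant on the closed disk, which is impossible since `‖f‖ = 1` on the circle while `‖f‖ < δ < 1`
on `D₀`. Since `closure D₀` is compact, the closure of `f '' D₀` lies in `f '' closure D₀`, and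
`‖f‖ = δ` on `closure D₀ \ D₀` by maximality of the component. Hence `f '' D₀` is open and
relatively closed in the connected disk `ball 0 δ`, which it meets at `f z₁`, so it contains it.
-/

open Set Metric Filter Topology

theorem ContinuousOn.apply_eq_of_mem_closure_of_notMem_connectedComponentIn
    {X : Type*} [TopologicalSpace X] {g : X → ℝ} {V : Set X} {δ : ℝ} {x w : X}
    (hg : ContinuousOn g V) (hwV : w ∈ V)
    (hw : w ∈ closure (connectedComponentIn {z ∈ V | g z < δ} x))
    (hwD : w ∉ connectedComponentIn {z ∈ V | g z < δ} x) : g w = δ := by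
  set S := {z ∈ V | g z < δ}
  set D := connectedComponentIn S x
  have hDS : D ⊆ S := connectedComponentIn_subset S x
  have hle : g w ≤ δ := by
    have := mem_closure_iff_nhdsWithin_neBot.mp hw
    exact le_of_tendsto ((hg w hwV).mono fun z hz => (hDS hz).1)
      (eventually_mem_nhdsWithin.mono fun z hz => (hDS hz).2.le)
  refine hle.antisymm (not_lt.1 fun hlt => hwD ?_)
  have hxD : x ∈ D := mem_connectedComponentIn
    (connectedComponentIn_nonempty_iff.mp (closure_nonempty_iff.mp ⟨w, hw⟩))
  have hins : IsPreconnected (insert w D) :=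
    isPreconnected_connectedComponentIn.subset_closure (subset_insert w D)
      (insert_subset hw subset_closure)
  exact hins.subset_connectedComponentIn (mem_insert_of_mem w hxD)
    (insert_subset (show w ∈ S from ⟨hwV, hlt⟩) hDS) (mem_insert w D)

theorem AnalyticOnNhd.eqOn_closure_of_eqOn_isOpen {𝕜 E F : Type*} [NontriviallyNormedField 𝕜]
    [NormedAddCommGroup E] [NormedSpace 𝕜 E] [NormedAddCommGroup F] [NormedSpace 𝕜 F]
    {f : E → F} {Ω D : Set E} {z₀ : E} {c : F} (hf : AnalyticOnNhd 𝕜 f Ω)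
    (hfc : ContinuousOn f (closure Ω)) (hΩ : IsPreconnected Ω) (hD : IsOpen D) (hDΩ : D ⊆ Ω)
    (hz₀ : z₀ ∈ D) (hc : EqOn f (fun _ => c) D) : EqOn f (fun _ => c) (closure Ω) :=
  (hf.eqOn_of_preconnected_of_eventuallyEq analyticOnNhd_const hΩ (hDΩ hz₀)
      (eventually_of_mem (hD.mem_nhds hz₀) hc)).of_subset_closure
    hfc continuousOn_const subset_closure Subset.rfl

theorem subset_image_of_isOpen_image_of_isCompact_closure {X Y : Type*} [TopologicalSpace X]
    [TopologicalSpace Y] [T2Space Y] {f : X → Y} {D : Set X} {B : Set Y}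
    (hfD : IsOpen (f '' D)) (hD : IsCompact (closure D)) (hf : ContinuousOn f (closure D))
    (hB : IsPreconnected B) (hfr : ∀ w ∈ closure D, w ∉ D → f w ∉ B)
    (hne : (B ∩ f '' D).Nonempty) : B ⊆ f '' D := by
  refine hB.subset_of_closure_inter_subset hfD hne ?_
  have hcl : closure (f '' D) ⊆ f '' closure D :=
    closure_minimal (image_mono subset_closure) (hD.image_of_continuousOn hf).isClosed
  rintro _ ⟨hy, hyB⟩
  obtain ⟨w, hw, rfl⟩ := hcl hy
  exact mem_image_of_mem f (by_contra fun hwD => hfr w hw hwD hyB)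

theorem face_attains_all_small_values_general (f : ℂ → ℂ) (U : Set ℂ)
    (hcl : closure (ball (0 : ℂ) 1) ⊆ U) (hf : AnalyticOnNhd ℂ f U)
    (hmod : ∀ z : ℂ, ‖z‖ = 1 → ‖f z‖ = 1)
    (δ : ℝ) (hδ0 : 0 < δ) (hδ1 : δ < 1)
    (D₀ : Set ℂ) (z₁ : ℂ) (hz₁ : z₁ ∈ ball (0 : ℂ) 1) (hz₁f : ‖f z₁‖ < δ)
    (hD₀ : D₀ = connectedComponentIn {z ∈ ball (0 : ℂ) 1 | ‖f z‖ < δ} z₁)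
    (hD₀cl : closure D₀ ⊆ ball (0 : ℂ) 1) :
    (∀ v : ℂ, ‖v‖ < δ → ∃ z ∈ D₀, f z = v) ∧ ∃ z ∈ D₀, f z = 0 := by
  subst hD₀
  set D₀ := connectedComponentIn {z ∈ ball (0 : ℂ) 1 | ‖f z‖ < δ} z₁
  have hball : ball (0 : ℂ) 1 ⊆ U := subset_closure.trans hcl
  have hfc : ContinuousOn f (closure (ball 0 1)) := hf.continuousOn.mono hcl
  have hnorm : ContinuousOn (fun z => ‖f z‖) (ball 0 1) := (hfc.mono subset_closure).norm
  have hD₀open : IsOpen D₀ :=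
    (hnorm.isOpen_inter_preimage isOpen_ball isOpen_Iio).connectedComponentIn
  have hz₁D : z₁ ∈ D₀ := mem_connectedComponentIn ⟨hz₁, hz₁f⟩
  have hD₀ball : D₀ ⊆ ball 0 1 := fun z hz => (connectedComponentIn_subset _ _ hz).1
  have hopen : IsOpen (f '' D₀) := by
    obtain ⟨c, hc⟩ | hopen :=
      (hf.mono (hD₀ball.trans hball)).is_constant_or_isOpen isPreconnected_connectedComponentIn
    · have hc1 : f 1 = c := (hf.mono hball).eqOn_closure_of_eqOn_isOpen hfc
        (convex_ball 0 1).isPreconnected hD₀open hD₀ball hz₁D hc (by simp [closure_ball])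
      have := hmod 1 norm_one
      rw [hc1, ← hc z₁ hz₁D] at this
      linarith
    · exact hopen D₀ Subset.rfl hD₀open
  have hcover : ball 0 δ ⊆ f '' D₀ := by
    refine subset_image_of_isOpen_image_of_isCompact_closure hopen
      ((isCompact_closedBall 0 1).of_isClosed_subset isClosed_closure
        (hD₀cl.trans ball_subset_closedBall))
      (hfc.mono (closure_mono hD₀ball)) (convex_ball 0 δ).isPreconnected ?_
      ⟨f z₁, mem_ball_zero_iff.mpr hz₁f, mem_image_of_mem f hz₁D⟩
    intro w hw hwD hwδ
    exact (mem_ball_zero_iff.mp hwδ).ne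
      (hnorm.apply_eq_of_mem_closure_of_notMem_connectedComponentIn (hD₀cl hw) hw hwD)
  exact ⟨fun v hv => hcover (mem_ball_zero_iff.mpr hv), hcover (mem_ball_self hδ0)⟩

theorem face_attains_all_small_values (f : ℂ → ℂ) (U : Set ℂ) (hU : IsOpen U)
    (hcl : closure (ball (0 : ℂ) 1) ⊆ U) (hf : AnalyticOnNhd ℂ f U)
    (hmod : ∀ z : ℂ, ‖z‖ = 1 → ‖f z‖ = 1)
    (δ : ℝ) (hδ0 : 0 < δ) (hδ1 : δ < 1)
    (D₀ : Set ℂ) (z₁ : ℂ) (hz₁ : z₁ ∈ ball (0 : ℂ) 1) (hz₁f : ‖f z₁‖ < δ)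
    (hD₀ : D₀ = connectedComponentIn {z ∈ ball (0 : ℂ) 1 | ‖f z‖ < δ} z₁)
    (hD₀cl : closure D₀ ⊆ ball (0 : ℂ) 1) :
    (∀ v : ℂ, ‖v‖ < δ → ∃ z ∈ D₀, f z = v) ∧ ∃ z ∈ D₀, f z = 0 :=
  face_attains_all_small_values_general f U hcl hf hmod δ hδ0 hδ1 D₀ z₁ hz₁ hz₁f hD₀ hD₀cl
end
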